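/- For any lattice coset Gaussian sum, shifting the center cannot increase the mass over the integers: for all s > 0 and μ ∈ ℝ, ∑_{k∈ℤ} exp(-π(k-μ)²/s²) ≤ ∑_{k∈ℤ} exp(-πk²/s²). -/

import Mathlib

/-!
By Poisson summation, in the form of the functional equation of the Jacobi theta function,
`∑ₖ exp (-π (k - μ)² / s²) = s · θ(μ, i s²)`. For real `μ` the terms `exp (2πinμ - π s² n²)` of
`θ(μ, i s²)` differ from the positive terms of `θ(0, i s²)` only by unimodular phases, so
`|θ(μ, i s²)| ≤ θ(0, i s²)`.
-/

open Real Complex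

lemma jacobiTheta₂_term_zero_I_mul_eq_norm (n : ℤ) (x t : ℝ) :
    jacobiTheta₂_term n 0 (I * t) = ‖jacobiTheta₂_term n x (I * t)‖ := by
  rw [norm_jacobiTheta₂_term, jacobiTheta₂_term, ofReal_exp]
  congr 1
  push_cast
  ring_nf
  simp [I_sq]

lemma norm_jacobiTheta₂_I_mul_le (x t : ℝ) :
    ‖jacobiTheta₂ x (I * t)‖ ≤ ‖jacobiTheta₂ 0 (I * t)‖ := by
  rcases le_or_gt t 0 with ht | ht
  · rw [jacobiTheta₂_undef _ (by simpa using ht)]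
    simp
  have hsum : Summable fun n ↦ ‖jacobiTheta₂_term n x (I * t)‖ :=
    ((summable_jacobiTheta₂_term_iff _ _).mpr (by simpa using ht)).norm
  have h0 : jacobiTheta₂ 0 (I * t) = ((∑' n, ‖jacobiTheta₂_term n x (I * t)‖ : ℝ) : ℂ) := by
    simp only [jacobiTheta₂, jacobiTheta₂_term_zero_I_mul_eq_norm _ x, ofReal_tsum]
  rw [h0, norm_real, norm_of_nonneg (tsum_nonneg fun _ ↦ norm_nonneg _)]
  exact norm_tsum_le_tsum_norm hsum

lemma tsum_exp_neg_sub_sq_div_sq_eq_jacobiTheta₂ {s : ℝ} (hs : 0 < s) (μ : ℝ) :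
    ((∑' k : ℤ, rexp (-π * ((k : ℝ) - μ) ^ 2 / s ^ 2) : ℝ) : ℂ) =
      s * jacobiTheta₂ μ (I * (s : ℂ) ^ 2) := by
  have hs' : (s : ℂ) ≠ 0 := by exact_mod_cast hs.ne'
  have hroot : ((s : ℂ) ^ 2) ^ (1 / 2 : ℂ) = s := by
    rw [one_div]
    exact sq_cpow_two_inv (by simpa using hs)
  rw [jacobiTheta₂_functional_equation, (by ring : -I * (I * (s : ℂ) ^ 2) = -I ^ 2 * s ^ 2),
    I_sq, neg_neg, one_mul, hroot, jacobiTheta₂, ← tsum_mul_left, ← tsum_mul_left, ofReal_tsum]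
  refine tsum_congr fun n ↦ ?_
  rw [jacobiTheta₂_term, ofReal_exp, ← mul_assoc, ← mul_assoc, mul_one_div_cancel hs', one_mul,
    ← Complex.exp_add]
  congr 1
  push_cast
  field_simp
  ring_nf

lemma tsum_exp_neg_sub_sq_div_sq_eq_norm_jacobiTheta₂ {s : ℝ} (hs : 0 < s) (μ : ℝ) :
    ∑' k : ℤ, rexp (-π * ((k : ℝ) - μ) ^ 2 / s ^ 2) =
      s * ‖jacobiTheta₂ μ (I * ((s ^ 2 : ℝ) : ℂ))‖ := by
  rw [← norm_of_nonneg (tsum_nonneg fun _ ↦ (exp_pos _).le), ← norm_real,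
    tsum_exp_neg_sub_sq_div_sq_eq_jacobiTheta₂ hs, norm_mul, norm_real, norm_of_nonneg hs.le,
    ofReal_pow]

theorem center_shift_gaussian_mass (s μ : ℝ) (hs : 0 < s) :
    (∑' k : ℤ, Real.exp (-π * ((k : ℝ) - μ) ^ 2 / s ^ 2)) ≤
      ∑' k : ℤ, Real.exp (-π * (k : ℝ) ^ 2 / s ^ 2) := by
  calc (∑' k : ℤ, rexp (-π * ((k : ℝ) - μ) ^ 2 / s ^ 2))
      = s * ‖jacobiTheta₂ μ (I * ((s ^ 2 : ℝ) : ℂ))‖ :=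
        tsum_exp_neg_sub_sq_div_sq_eq_norm_jacobiTheta₂ hs μ
    _ ≤ s * ‖jacobiTheta₂ 0 (I * ((s ^ 2 : ℝ) : ℂ))‖ := by
        gcongr
        exact norm_jacobiTheta₂_I_mul_le μ _
    _ = ∑' k : ℤ, rexp (-π * (k : ℝ) ^ 2 / s ^ 2) := by
        simpa using (tsum_exp_neg_sub_sq_div_sq_eq_norm_jacobiTheta₂ hs 0).symm
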